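/- Let n, t ∈ ℕ with t + 1 ≤ n, let a ∈ ℝⁿ and b ∈ ℝ, and let g(x) = ∑_{i=1}^n a_i x_i − b; for I ⊆ [n] write g(x_I) = ∑_{i ∈ I} a_i − b. Let α > 0 and set y_I = α for every I ⊆ [n] with |I| ≤ t + 1 and y_I = 0 otherwise. Then the P_t(n) × P_t(n) matrix ∑_{I ⊆ [n]} g(x_I) y_I Z_I Z_Iᵀ (with t-zeta vectors Z_I) is positive semidefinite if and only if for every vector v ∈ ℝ^{P_t(n)}: ∑_{I ⊆ [n], |I| ≤ t} g(x_I) v_I² + ∑_{J ⊆ [n], |J| = t+1} ( ∑_{I ⊆ J, |I| ≤ t} (−1)^{|I|} v_I )² g(x_J) ≥ 0. -/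

import Mathlib

open Finset Matrix

noncomputable def zeta (n d : ℕ) (I : Finset (Fin n)) :
    {J : Finset (Fin n) // J.card ≤ d} → ℝ :=
  fun J => if (J : Finset (Fin n)) ⊆ I then 1 else 0

/-! Write `W_v(I) = Z_I ⬝ v = ∑_{K ⊆ I, |K| ≤ t} v_K`. Since `y` vanishes above level `t + 1`,
the quadratic form of the matrix at `v` is
`α (∑_{|I| ≤ t} g(x_I) W_v(I)² + ∑_{|J| = t+1} g(x_J) W_v(J)²)`.
Möbius inversion on the Boolean lattice gives `∑_{I ⊆ J} (-1)^|I| W_v(I) = (-1)^|J| v_J`, which is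
`0` when `|J| = t + 1`; so `W_v(J)² = (∑_{I ⊊ J} (-1)^|I| W_v(I))²` and the form is `α` times the
right-hand side evaluated at `u = W_v|_{P_t(n)}`. The same inversion shows that `v ↦ W_v|_{P_t(n)}`
is injective, hence bijective, so `u` ranges over all of `ℝ^{P_t(n)}`. -/

theorem Finset.sum_powerset_neg_one_pow_card_mul_sum_powerset {α R : Type*} [DecidableEq α]
    [CommRing R] (f : Finset α → R) (J : Finset α) :
    ∑ I ∈ J.powerset, (-1 : R) ^ I.card * ∑ K ∈ I.powerset, f K = (-1) ^ J.card * f J := by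
  induction J using Finset.induction_on generalizing f with
  | empty => simp
  | insert a J ha ih =>
    have haI : ∀ I ∈ J.powerset, a ∉ I := fun I hI h => ha (mem_powerset.1 hI h)
    have hinsert : ∀ I ∈ J.powerset,
        (-1 : R) ^ (insert a I).card * ∑ K ∈ (insert a I).powerset, f K
          = -((-1) ^ I.card * ∑ K ∈ I.powerset, f K)
            - (-1) ^ I.card * ∑ K ∈ I.powerset, f (insert a K) := by
      intro I hI
      rw [card_insert_of_notMem (haI I hI), sum_powerset_insert (haI I hI)]
      ring
    rw [sum_powerset_insert ha, card_insert_of_notMem ha]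
    simp only [sum_congr rfl hinsert, sum_sub_distrib, sum_neg_distrib, ih]
    ring

theorem Finset.sum_filter_subtype_subset {α R : Type*} [Fintype α] [DecidableEq α]
    [AddCommMonoid R] (p : Finset α → Prop) [DecidablePred p] (J : Finset α)
    (f : Finset α → R) :
    ∑ I ∈ univ.filter (fun I : {K // p K} => I.1 ⊆ J), f I = ∑ I ∈ J.powerset with p I, f I := by
  rw [← sum_subtype_eq_sum_filter f (s := J.powerset)]
  refine sum_congr ?_ fun _ _ => rfl
  ext I
  simp

theorem Matrix.dotProduct_sum_smul_vecMulVec_self_mulVec {ι κ R : Type*} [Fintype ι]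
    [Fintype κ] [CommRing R] (c : κ → R) (z : κ → ι → R) (x : ι → R) :
    x ⬝ᵥ ((∑ k, c k • vecMulVec (z k) (z k)) *ᵥ x) = ∑ k, c k * (z k ⬝ᵥ x) ^ 2 := by
  simp [sum_mulVec, smul_mulVec, vecMulVec_mulVec, dotProduct_comm x, sum_dotProduct,
    smul_dotProduct, sq]

theorem Matrix.isHermitian_sum_smul_vecMulVec_self {ι κ R : Type*} [Fintype κ] [CommRing R]
    [StarRing R] [TrivialStar R] (c : κ → R) (z : κ → ι → R) :
    (∑ k, c k • vecMulVec (z k) (z k)).IsHermitian := by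
  simp [IsHermitian, transpose_sum, transpose_smul, transpose_vecMulVec]

section

variable {n d : ℕ}

theorem zeta_dotProduct_eq_sum_powerset (v : {K : Finset (Fin n) // K.card ≤ d} → ℝ)
    (I : Finset (Fin n)) :
    zeta n d I ⬝ᵥ v = ∑ K ∈ I.powerset, Function.extend Subtype.val v 0 K := by
  have hv : ∀ K, v K = Function.extend Subtype.val v 0 K.1 := fun K =>
    (Subtype.val_injective.extend_apply v 0 K).symm
  simp only [dotProduct, zeta, ite_mul, one_mul, zero_mul, hv]
  rw [← sum_filter, sum_filter_subtype_subset (fun K : Finset (Fin n) => K.card ≤ d)]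
  refine sum_filter_of_ne fun K _ hK => ?_
  by_contra hd
  exact hK (Function.extend_apply' _ _ _ fun ⟨K', hK'⟩ => hd (hK' ▸ K'.2))

theorem sum_powerset_neg_one_pow_card_mul_zeta_dotProduct
    (v : {K : Finset (Fin n) // K.card ≤ d} → ℝ) (J : Finset (Fin n)) :
    ∑ I ∈ J.powerset, (-1) ^ I.card * (zeta n d I ⬝ᵥ v)
      = (-1) ^ J.card * Function.extend Subtype.val v 0 J := by
  simp only [zeta_dotProduct_eq_sum_powerset, sum_powerset_neg_one_pow_card_mul_sum_powerset]

theorem zeta_dotProduct_injective :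
    Function.Injective fun (v : {K : Finset (Fin n) // K.card ≤ d} → ℝ)
      (I : {K : Finset (Fin n) // K.card ≤ d}) => zeta n d I.1 ⬝ᵥ v := by
  intro v w hvw
  funext J
  have hmoebius : ∀ v, (-1) ^ J.1.card * v J
      = ∑ I ∈ J.1.powerset, (-1) ^ I.card * (zeta n d I ⬝ᵥ v) := fun v => by
    rw [sum_powerset_neg_one_pow_card_mul_zeta_dotProduct, Subtype.val_injective.extend_apply]
  have hsub : ∀ I ∈ J.1.powerset, zeta n d I ⬝ᵥ v = zeta n d I ⬝ᵥ w := fun I hI =>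
    congrFun hvw ⟨I, (card_le_card (mem_powerset.1 hI)).trans J.2⟩
  refine mul_left_cancel₀ (pow_ne_zero J.1.card (neg_ne_zero.2 (one_ne_zero' ℝ))) ?_
  rw [hmoebius v, hmoebius w]
  exact sum_congr rfl fun I hI => by rw [hsub I hI]

theorem zeta_dotProduct_surjective :
    Function.Surjective fun (v : {K : Finset (Fin n) // K.card ≤ d} → ℝ)
      (I : {K : Finset (Fin n) // K.card ≤ d}) => zeta n d I.1 ⬝ᵥ v := by
  have hinj : Function.Injective
      (Matrix.of fun (I : {K : Finset (Fin n) // K.card ≤ d}) => zeta n d I.1).mulVec :=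
    zeta_dotProduct_injective
  exact mulVec_surjective_iff_isUnit.2 (mulVec_injective_iff_isUnit.1 hinj)

theorem sum_subset_neg_one_pow_card_mul_zeta_dotProduct
    (v : {K : Finset (Fin n) // K.card ≤ d} → ℝ) {J : Finset (Fin n)} (hJ : J.card = d + 1) :
    ∑ I ∈ univ.filter (fun I : {K : Finset (Fin n) // K.card ≤ d} => I.1 ⊆ J),
        (-1) ^ I.1.card * (zeta n d I ⬝ᵥ v)
      = -((-1) ^ J.card * (zeta n d J ⬝ᵥ v)) := by
  have hproper : J.powerset.filter (·.card ≤ d) = J.powerset.erase J := by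
    ext I
    simp only [mem_filter, mem_erase, mem_powerset]
    constructor
    · rintro ⟨hIJ, hI⟩
      exact ⟨fun h => by subst h; omega, hIJ⟩
    · rintro ⟨hIJ, hI⟩
      have := card_lt_card (Finset.ssubset_iff_subset_ne.2 ⟨hI, hIJ⟩)
      exact ⟨hI, by omega⟩
  refine (sum_filter_subtype_subset (fun K : Finset (Fin n) => K.card ≤ d) J
    fun I => (-1) ^ I.card * (zeta n d I ⬝ᵥ v)).trans ?_
  rw [hproper, sum_erase_eq_sub (mem_powerset_self J),
    sum_powerset_neg_one_pow_card_mul_zeta_dotProduct,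
    Function.extend_apply' _ _ _ fun ⟨K, hK⟩ => by have := hK ▸ K.2; omega]
  simp

theorem dotProduct_sum_smul_vecMulVec_zeta_mulVec (g : Finset (Fin n) → ℝ) (α : ℝ)
    (v : {K : Finset (Fin n) // K.card ≤ d} → ℝ) :
    v ⬝ᵥ ((∑ I : Finset (Fin n), (g I * if I.card ≤ d + 1 then α else 0) •
        vecMulVec (zeta n d I) (zeta n d I)) *ᵥ v)
      = α * ((∑ I : {K : Finset (Fin n) // K.card ≤ d}, g I.1 * (zeta n d I.1 ⬝ᵥ v) ^ 2) +
          ∑ J ∈ powersetCard (d + 1) univ,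
            (∑ I ∈ univ.filter (fun I : {K : Finset (Fin n) // K.card ≤ d} => I.1 ⊆ J),
              (-1) ^ I.1.card * (zeta n d I.1 ⬝ᵥ v)) ^ 2 * g J) := by
  have hsplit : ∀ I : Finset (Fin n),
      (g I * if I.card ≤ d + 1 then α else 0) * (zeta n d I ⬝ᵥ v) ^ 2
        = (if I.card ≤ d then α * (g I * (zeta n d I ⬝ᵥ v) ^ 2) else 0)
          + (if I.card = d + 1 then α * ((zeta n d I ⬝ᵥ v) ^ 2 * g I) else 0) := by
    intro I
    split_ifs <;> first | ring1 | (exfalso; omega)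
  rw [dotProduct_sum_smul_vecMulVec_self_mulVec, sum_congr rfl fun I _ => hsplit I,
    sum_add_distrib, ← sum_filter, ← sum_filter, powersetCard_eq_filter, powerset_univ,
    mul_add, mul_sum, mul_sum]
  congr 1
  · exact sum_subtype _ (by simp) _
  · refine sum_congr rfl fun J hJ => ?_
    rw [sum_subset_neg_one_pow_card_mul_zeta_dotProduct v (mem_filter.1 hJ).2]
    simp [mul_pow, ← pow_mul]

end

theorem stmt_11_general (n t : ℕ) (a : Fin n → ℝ) (b : ℝ)
    (α : ℝ) (hα : 0 < α) :
    let g : Finset (Fin n) → ℝ := fun I => (∑ i ∈ I, a i) - b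
    let y : Finset (Fin n) → ℝ := fun I => if I.card ≤ t + 1 then α else 0
    (∑ I : Finset (Fin n),
        (g I * y I) • Matrix.vecMulVec (zeta n t I) (zeta n t I)).PosSemidef ↔
      ∀ v : {K : Finset (Fin n) // K.card ≤ t} → ℝ,
        0 ≤ (∑ I : {K : Finset (Fin n) // K.card ≤ t}, g I.1 * v I ^ 2) +
          ∑ J ∈ Finset.powersetCard (t + 1) (Finset.univ : Finset (Fin n)),
            (∑ I ∈ Finset.univ.filter
                (fun I : {K : Finset (Fin n) // K.card ≤ t} => (I : Finset (Fin n)) ⊆ J),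
              (-1 : ℝ) ^ I.1.card * v I) ^ 2 * g J := by
  intro g y
  have hquad := dotProduct_sum_smul_vecMulVec_zeta_mulVec (d := t) g α
  rw [posSemidef_iff_dotProduct_mulVec]
  constructor
  · rintro ⟨-, hM⟩ u
    obtain ⟨v, rfl⟩ := zeta_dotProduct_surjective u
    have hv := hM v
    rw [star_trivial, hquad v] at hv
    exact (mul_nonneg_iff_of_pos_left hα).1 hv
  · intro h
    refine ⟨isHermitian_sum_smul_vecMulVec_self _ _, fun v => ?_⟩
    rw [star_trivial, hquad v]
    exact mul_nonneg hα.le (h _)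

theorem stmt_11 (n t : ℕ) (ht : t + 1 ≤ n) (a : Fin n → ℝ) (b : ℝ)
    (α : ℝ) (hα : 0 < α) :
    let g : Finset (Fin n) → ℝ := fun I => (∑ i ∈ I, a i) - b
    let y : Finset (Fin n) → ℝ := fun I => if I.card ≤ t + 1 then α else 0
    (∑ I : Finset (Fin n),
        (g I * y I) • Matrix.vecMulVec (zeta n t I) (zeta n t I)).PosSemidef ↔
      ∀ v : {K : Finset (Fin n) // K.card ≤ t} → ℝ,
        0 ≤ (∑ I : {K : Finset (Fin n) // K.card ≤ t}, g I.1 * v I ^ 2) +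
          ∑ J ∈ Finset.powersetCard (t + 1) (Finset.univ : Finset (Fin n)),
            (∑ I ∈ Finset.univ.filter
                (fun I : {K : Finset (Fin n) // K.card ≤ t} => (I : Finset (Fin n)) ⊆ J),
              (-1 : ℝ) ^ I.1.card * v I) ^ 2 * g J :=
  stmt_11_general n t a b α hα
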